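/- arXiv:2011.09415 — 2 statements merged into one kernel-verified Lean document; each statement's English description precedes it below -/
import Mathlib

section
/- Let n ≥ 1 be an integer and set W(n) = (−A⁶−A⁻⁶)·(−A²−A⁻²) + (−A⁴−A⁻⁴+2)·P(n)·P̄(n) in ℤ[A, A⁻¹]. Then h(W(n)) = 4n+12 and ℓ(W(n)) = −4n−12, so that span(W(n)) = 8n+24; in particular span(W(n)) > 16, hence span(W(n)) ≠ 16. -/
/-!
The highest exponent of `W(n)` comes only from the second summand: the first one, a product of
two-term factors, stops at `A⁸`, while the top terms `-A⁴`, `(-1)ⁿ A^{3n+2}` and `A^{n+6}` of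
`-A⁴-A⁻⁴+2`, `P(n)` and `P̄(n)` multiply to `-(-1)ⁿ A^{4n+12}`, which nothing can cancel.
The substitution `A ↦ A⁻¹` exchanges `P(n)` and `P̄(n)` and fixes `W(n)`, so the lowest
exponent is `-(4n+12)`.
-/

open LaurentPolynomial Finset

/-- The coefficient of `A^k` in the Laurent polynomial `y ∈ ℤ[A,A⁻¹]`. -/
noncomputable def coeffA (y : LaurentPolynomial ℤ) (k : ℤ) : ℤ := AddMonoidAlgebra.coeff y k

/-- `y` has highest exponent `d`, with coefficient `c` (nonzero) on `A^d`. -/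
def HiCoeff (y : LaurentPolynomial ℤ) (d c : ℤ) : Prop :=
  coeffA y d = c ∧ c ≠ 0 ∧ ∀ k, d < k → coeffA y k = 0

/-- `y` has lowest exponent `d`, with coefficient `c` (nonzero) on `A^d`. -/
def LoCoeff (y : LaurentPolynomial ℤ) (d c : ℤ) : Prop :=
  coeffA y d = c ∧ c ≠ 0 ∧ ∀ k, k < d → coeffA y k = 0

/-- `y` has highest exponent `d`: `h(y) = d`. -/
def IsHi (y : LaurentPolynomial ℤ) (d : ℤ) : Prop :=
  coeffA y d ≠ 0 ∧ ∀ k, d < k → coeffA y k = 0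

/-- `y` has lowest exponent `d`: `ℓ(y) = d`. -/
def IsLo (y : LaurentPolynomial ℤ) (d : ℤ) : Prop :=
  coeffA y d ≠ 0 ∧ ∀ k, k < d → coeffA y k = 0

/-- P(n) = A^{−n−6} + (A⁴+A⁻⁴)·Σ_{k=1}^{n} (−1)^k A^{4k−n−2} -/
noncomputable def P (n : ℕ) : LaurentPolynomial ℤ :=
  T (-(n:ℤ) - 6) +
    (T 4 + T (-4)) * ∑ k ∈ Finset.Icc 1 n, (-1 : LaurentPolynomial ℤ)^k * T (4*(k:ℤ) - n - 2)

/-- P̄(n) = A^{n+6} + (A⁴+A⁻⁴)·Σ_{k=1}^{n} (−1)^k A^{−4k+n+2} -/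
noncomputable def Pbar (n : ℕ) : LaurentPolynomial ℤ :=
  T ((n:ℤ) + 6) +
    (T 4 + T (-4)) * ∑ k ∈ Finset.Icc 1 n, (-1 : LaurentPolynomial ℤ)^k * T (-4*(k:ℤ) + n + 2)

/-- Q(j) = −A^{2−j} + Σ_{k=0}^{j} (−1)^{k+1} A^{4k−j−2} -/
noncomputable def Q (j : ℕ) : LaurentPolynomial ℤ :=
  -T (2 - (j:ℤ)) + ∑ k ∈ Finset.range (j+1), (-1 : LaurentPolynomial ℤ)^(k+1) * T (4*(k:ℤ) - j - 2)

/-- N(j) = (−A⁶−A⁻⁶)·(−A³)^j + (−A⁴−A⁻⁴+2)·Q(j) -/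
noncomputable def N (j : ℕ) : LaurentPolynomial ℤ :=
  (-T 6 - T (-6)) * (-T 3)^j + (-T 4 - T (-4) + 2) * Q j

/-- R(m) = A^{−m−5} + (A⁴+A⁻⁴)·Σ_{k=1}^{m−1} (−1)^k A^{4k−m−1} -/
noncomputable def Rm (m : ℕ) : LaurentPolynomial ℤ :=
  T (-(m:ℤ) - 5) +
    (T 4 + T (-4)) * ∑ k ∈ Finset.Icc 1 (m-1), (-1 : LaurentPolynomial ℤ)^k * T (4*(k:ℤ) - m - 1)

def VanishesAbove (y : LaurentPolynomial ℤ) (d : ℤ) : Prop :=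
  ∀ k, d < k → coeffA y k = 0

section Coefficients

variable {p q y : LaurentPolynomial ℤ} {c k : ℤ}

@[simp] lemma coeffA_add : coeffA (p + q) k = coeffA p k + coeffA q k := rfl

@[simp] lemma coeffA_neg : coeffA (-p) k = -coeffA p k := rfl

lemma coeffA_T (m : ℤ) : coeffA (T m) k = if m = k then 1 else 0 := by
  rw [coeffA, T, AddMonoidAlgebra.coeff_single, Finsupp.single_apply]

lemma coeffA_C : coeffA (C c) k = if k = 0 then c else 0 :=
  C_apply c k

lemma coeffA_invert : coeffA (invert y) k = coeffA y (-k) :=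
  invert_apply y k

end Coefficients

namespace VanishesAbove

variable {p q y : LaurentPolynomial ℤ} {d e k : ℤ}

lemma mono (h : VanishesAbove y d) (hde : d ≤ e) : VanishesAbove y e :=
  fun k hk => h k (hde.trans_lt hk)

lemma le_of_mem_support (h : VanishesAbove y d) (hk : k ∈ y.coeff.support) : k ≤ d :=
  not_lt.mp fun hlt => Finsupp.mem_support_iff.mp hk (h k hlt)

lemma add (hp : VanishesAbove p d) (hq : VanishesAbove q d) : VanishesAbove (p + q) d :=
  fun k hk => by simp [hp k hk, hq k hk]

lemma neg (h : VanishesAbove y d) : VanishesAbove (-y) d :=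
  fun k hk => by simp [h k hk]

lemma sub (hp : VanishesAbove p d) (hq : VanishesAbove q d) : VanishesAbove (p - q) d := by
  simpa only [sub_eq_add_neg] using hp.add hq.neg

lemma sum {ι : Type*} {s : Finset ι} {f : ι → LaurentPolynomial ℤ}
    (h : ∀ i ∈ s, VanishesAbove (f i) d) : VanishesAbove (∑ i ∈ s, f i) d :=
  Finset.sum_induction f (VanishesAbove · d) (fun _ _ => add) (fun _ _ => rfl) h

lemma neg_one_pow_mul (h : VanishesAbove y d) (j : ℕ) : VanishesAbove ((-1) ^ j * y) d := by
  rcases neg_one_pow_eq_or (LaurentPolynomial ℤ) j with hj | hj <;> simp [hj, h, h.neg]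

lemma mul (hp : VanishesAbove p d) (hq : VanishesAbove q e) : VanishesAbove (p * q) (d + e) := by
  classical
  intro k hk
  by_contra hne
  obtain ⟨a, ha, b, hb, rfl⟩ := Finset.mem_add.mp
    (AddMonoidAlgebra.support_coeff_mul_subset p q (Finsupp.mem_support_iff.mpr hne))
  linarith [hp.le_of_mem_support ha, hq.le_of_mem_support hb]

end VanishesAbove

lemma vanishesAbove_T (m : ℤ) : VanishesAbove (T m) m :=
  fun k hk => by simp [coeffA_T, hk.ne]

lemma vanishesAbove_C (c : ℤ) : VanishesAbove (C c) 0 :=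
  fun k hk => by rw [coeffA_C, if_neg hk.ne']

namespace HiCoeff

variable {p q y : LaurentPolynomial ℤ} {a b c d e : ℤ}

lemma vanishesAbove (h : HiCoeff y d c) : VanishesAbove y d := h.2.2

lemma isHi (h : HiCoeff y d c) : IsHi y d := ⟨h.1 ▸ h.2.1, h.2.2⟩

lemma add_vanishesAbove (hp : HiCoeff p d c) (hq : VanishesAbove q e) (hed : e < d) :
    HiCoeff (p + q) d c := by
  refine ⟨?_, hp.2.1, (hp.vanishesAbove.add (hq.mono hed.le))⟩
  simp [hp.1, hq d hed]

lemma vanishesAbove_add (hp : HiCoeff p d c) (hq : VanishesAbove q e) (hed : e < d) :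
    HiCoeff (q + p) d c :=
  add_comm p q ▸ hp.add_vanishesAbove hq hed

lemma neg (h : HiCoeff y d c) : HiCoeff (-y) d (-c) :=
  ⟨by simp [h.1], neg_ne_zero.mpr h.2.1, h.vanishesAbove.neg⟩

lemma neg_one_pow_mul (h : HiCoeff y d c) (j : ℕ) : HiCoeff ((-1) ^ j * y) d ((-1) ^ j * c) := by
  rcases Nat.even_or_odd j with hj | hj <;> simp [hj.neg_one_pow, h, h.neg]

lemma mul (hp : HiCoeff p d a) (hq : HiCoeff q e b) : HiCoeff (p * q) (d + e) (a * b) := by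
  refine ⟨?_, mul_ne_zero hp.2.1 hq.2.1, hp.vanishesAbove.mul hq.vanishesAbove⟩
  rw [← hp.1, ← hq.1]
  refine AddMonoidAlgebra.coeff_mul_add_of_uniqueAdd fun {x z} hx hz hxz => ?_
  have := hp.vanishesAbove.le_of_mem_support hx
  have := hq.vanishesAbove.le_of_mem_support hz
  constructor <;> linarith

end HiCoeff

lemma hiCoeff_T (m : ℤ) : HiCoeff (T m) m 1 :=
  ⟨by simp [coeffA_T], one_ne_zero, vanishesAbove_T m⟩

lemma isLo_of_isHi_invert {y : LaurentPolynomial ℤ} {d : ℤ} (h : IsHi (invert y) (-d)) :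
    IsLo y d := by
  refine ⟨by simpa [coeffA_invert] using h.1, fun k hk => ?_⟩
  simpa [coeffA_invert] using h.2 (-k) (by omega)

lemma hiCoeff_T_add_T_neg {m : ℤ} (hm : 0 < m) : HiCoeff (T m + T (-m)) m 1 :=
  (hiCoeff_T m).add_vanishesAbove (vanishesAbove_T (-m)) (by omega)

lemma vanishesAbove_neg_T_sub_T_neg {m : ℤ} (hm : 0 ≤ m) : VanishesAbove (-T m - T (-m)) m :=
  (vanishesAbove_T m).neg.sub ((vanishesAbove_T (-m)).mono (by omega))

lemma invert_neg_T_sub_T_neg (m : ℤ) :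
    invert (-T m - T (-m) : LaurentPolynomial ℤ) = -T m - T (-m) := by
  rw [map_sub, map_neg, invert_T, invert_T, neg_neg, neg_sub_comm]

lemma hiCoeff_neg_T_sub_T_neg_add_two {m : ℤ} (hm : 0 < m) :
    HiCoeff (-T m - T (-m) + 2) m (-1) := by
  rw [sub_eq_add_neg, add_assoc, ← map_ofNat C 2]
  have hlow : VanishesAbove (-T (-m) + C 2) 0 :=
    ((vanishesAbove_T (-m)).mono (by omega)).neg.add (vanishesAbove_C 2)
  exact (hiCoeff_T m).neg.add_vanishesAbove hlow hm

lemma hiCoeff_P {n : ℕ} (hn : 1 ≤ n) : HiCoeff (P n) (3 * n + 2) ((-1) ^ n) := by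
  have hsum :
      HiCoeff (∑ k ∈ Icc 1 n, (-1) ^ k * T (4 * (k : ℤ) - n - 2)) (3 * n - 2) ((-1) ^ n) := by
    obtain ⟨m, rfl⟩ := Nat.exists_eq_add_of_le' hn
    rw [Finset.sum_Icc_succ_top hn]
    have htop := (hiCoeff_T (4 * ((m + 1 : ℕ) : ℤ) - (m + 1 : ℕ) - 2)).neg_one_pow_mul (m + 1)
    rw [mul_one] at htop
    refine HiCoeff.vanishesAbove_add (e := 3 * m - 3) (by convert htop using 1; push_cast; ring)
      (VanishesAbove.sum fun k hk => ((vanishesAbove_T _).mono ?_).neg_one_pow_mul k) (by omega)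
    simp only [mem_Icc] at hk
    omega
  have htop := (hiCoeff_T_add_T_neg (by norm_num : (0 : ℤ) < 4)).mul hsum
  rw [one_mul, show (4 : ℤ) + (3 * n - 2) = 3 * n + 2 by ring] at htop
  exact htop.vanishesAbove_add (vanishesAbove_T _) (by omega)

lemma hiCoeff_Pbar (n : ℕ) : HiCoeff (Pbar n) (n + 6) 1 := by
  have hsum : VanishesAbove (∑ k ∈ Icc 1 n, (-1) ^ k * T (-4 * (k : ℤ) + n + 2)) (n - 2) :=
    VanishesAbove.sum fun k hk =>
      ((vanishesAbove_T _).mono (by simp only [mem_Icc] at hk; omega)).neg_one_pow_mul k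
  have hrest := (hiCoeff_T_add_T_neg (by norm_num : (0 : ℤ) < 4)).vanishesAbove.mul hsum
  exact (hiCoeff_T _).add_vanishesAbove hrest (by omega)

lemma invert_P (n : ℕ) : invert (P n) = Pbar n := by
  have hexp (k : ℕ) : -(4 * (k : ℤ) - n - 2) = -4 * k + n + 2 := by ring
  simp only [P, Pbar, map_add, map_mul, map_sum, map_pow, map_neg, map_one, invert_T, hexp,
    neg_sub_left, neg_neg]
  rw [add_comm (T (-4)), add_comm 6]

lemma invert_Pbar (n : ℕ) : invert (Pbar n) = P n := by
  rw [← invert_P]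
  exact involutive_invert _

noncomputable def bracketW (n : ℕ) : LaurentPolynomial ℤ :=
  (-T 6 - T (-6)) * (-T 2 - T (-2)) + (-T 4 - T (-4) + 2) * (P n * Pbar n)

lemma invert_bracketW (n : ℕ) : invert (bracketW n) = bracketW n := by
  rw [bracketW, map_add, map_mul, invert_neg_T_sub_T_neg, invert_neg_T_sub_T_neg, map_mul,
    map_add, invert_neg_T_sub_T_neg, map_ofNat, map_mul, invert_P, invert_Pbar, mul_comm (Pbar n)]

lemma hiCoeff_bracketW {n : ℕ} (hn : 1 ≤ n) :
    HiCoeff (bracketW n) (4 * n + 12) (-(-1) ^ n) := by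
  have hlow := (vanishesAbove_neg_T_sub_T_neg (m := 6) (by norm_num)).mul
    (vanishesAbove_neg_T_sub_T_neg (m := 2) (by norm_num))
  have h := (hiCoeff_neg_T_sub_T_neg_add_two (m := 4) (by norm_num)).mul
    ((hiCoeff_P hn).mul (hiCoeff_Pbar n))
  rw [mul_one, neg_one_mul, show (4 : ℤ) + (3 * n + 2 + (n + 6)) = 4 * n + 12 by ring] at h
  exact h.vanishesAbove_add hlow (by omega)

lemma isLo_bracketW {n : ℕ} (hn : 1 ≤ n) : IsLo (bracketW n) (-4 * n - 12) := by
  refine isLo_of_isHi_invert ?_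
  rw [invert_bracketW, show -(-4 * (n : ℤ) - 12) = 4 * n + 12 by ring]
  exact (hiCoeff_bracketW hn).isHi

/-- the bracket W(n) = (−A⁶−A⁻⁶)(−A²−A⁻²) + (−A⁴−A⁻⁴+2)·P(n)·P̄(n)
has h = 4n+12, ℓ = −4n−12, span 8n+24 > 16, hence span ≠ 16. -/
theorem stmt_1 (n : ℕ) (hn : 1 ≤ n)
    (W : LaurentPolynomial ℤ)
    (hW : W = (-T 6 - T (-6)) * (-T 2 - T (-2)) + (-T 4 - T (-4) + 2) * (P n * Pbar n)) :
    IsHi W (4*(n:ℤ) + 12) ∧ IsLo W (-4*(n:ℤ) - 12) ∧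
    (4*(n:ℤ) + 12) - (-4*(n:ℤ) - 12) = 8*(n:ℤ) + 24 ∧
    8*(n:ℤ) + 24 > 16 ∧ 8*(n:ℤ) + 24 ≠ 16 := by
  change W = bracketW n at hW
  subst hW
  exact ⟨(hiCoeff_bracketW hn).isHi, isLo_bracketW hn, by ring, by omega, by omega⟩
end

section
/- Let f, g ∈ ℤ[A, A⁻¹] satisfy: h(f) = 40 with the coefficient of A^{40} in f equal to 1, ℓ(f) = −52 with the coefficient of A^{−52} in f equal to −1, h(g) = 34 with the coefficient of A^{34} in g equal to −1, and ℓ(g) = −58 with the coefficient of A^{−58} in g equal to 1. Let δ = −A²−A⁻², and define sequences f_n, g_n for n ≥ 1 by f₁ = f, g₁ = g, f_{n+1} = f_n·f, and g_{n+1} = f_n·g + g_n·f + δ·g_n·g. Then for every n ≥ 1: h(f_n) = 40n with the coefficient of A^{40n} in f_n equal to 1; ℓ(f_n) = −52n with the coefficient of A^{−52n} in f_n equal to (−1)^n; h(g_n) = 40n−6 with the coefficient of A^{40n−6} in g_n equal to −n; and ℓ(g_n) = −60n+2 with the coefficient of A^{−60n+2} in g_n equal to (−1)^{n+1}. -/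
/-! The extreme monomials of a product are the products of the extreme monomials, and the
lowest-degree statements reduce to highest-degree ones under `A ↦ A⁻¹` (`invert`). In
`g_{n+1} = f_n g + g_n f + δ g_n g` the top degree `40n + 34` is reached by `f_n g` and `g_n f`
(coefficients `-1` and `-n`) but not by `δ g_n g`, which stops at `40n + 30`; the bottom degree
`-60n - 58` is reached only by `δ g_n g`, since for `n ≥ 1` the other two terms start at
`-52n - 58` and `-60n - 50`. -/

open LaurentPolynomial Finset

namespace LaurentPolynomial

variable {R : Type*} [Semiring R] {y z : R[T;T⁻¹]} {d e : ℤ}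

theorem coeff_mul_eq_zero_of_lt (hy : ∀ k, d < k → y.coeff k = 0)
    (hz : ∀ k, e < k → z.coeff k = 0) {k : ℤ} (hk : d + e < k) : (y * z).coeff k = 0 := by
  classical
  rw [AddMonoidAlgebra.coeff_mul]
  refine Finset.sum_eq_zero fun a _ => Finset.sum_eq_zero fun b _ => ?_
  dsimp only
  split_ifs with hab
  · rcases le_or_gt a d with had | had
    · rw [hz b (by omega), mul_zero]
    · rw [hy a had, zero_mul]
  · rfl

theorem coeff_mul_add_of_forall_lt (hy : ∀ k, d < k → y.coeff k = 0)
    (hz : ∀ k, e < k → z.coeff k = 0) : (y * z).coeff (d + e) = y.coeff d * z.coeff e := by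
  classical
  rw [AddMonoidAlgebra.coeff_mul, Finsupp.sum, Finset.sum_eq_single d]
  · rw [Finsupp.sum, Finset.sum_eq_single e, if_pos rfl]
    · intro b _ hb
      rw [if_neg (by omega)]
    · intro he
      rw [if_pos rfl, Finsupp.notMem_support_iff.mp he, mul_zero]
  · intro a ha had
    refine Finset.sum_eq_zero fun b _ => ?_
    dsimp only
    split_ifs with hab
    · rcases lt_or_gt_of_ne had with had | had
      · rw [hz b (by omega), mul_zero]
      · rw [hy a had, zero_mul]
    · rfl
  · intro hd
    refine Finset.sum_eq_zero fun b _ => ?_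
    dsimp only
    rw [Finsupp.notMem_support_iff.mp hd, zero_mul, ite_self]

end LaurentPolynomial

section Extremes

variable {y z : LaurentPolynomial ℤ} {d e a b : ℤ}

theorem HiCoeff.mul_s11 (hy : HiCoeff y d a) (hz : HiCoeff z e b) :
    HiCoeff (y * z) (d + e) (a * b) :=
  ⟨(coeff_mul_add_of_forall_lt hy.2.2 hz.2.2).trans (by rw [← hy.1, ← hz.1]; rfl),
    mul_ne_zero hy.2.1 hz.2.1, fun _ hk => coeff_mul_eq_zero_of_lt hy.2.2 hz.2.2 hk⟩

theorem hiCoeff_invert_iff : HiCoeff (invert y) d a ↔ LoCoeff y (-d) a := by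
  simp only [HiCoeff, LoCoeff, coeffA, invert_apply]
  refine and_congr_right fun _ => and_congr_right fun _ =>
    ⟨fun h k hk => by simpa using h (-k) (by omega), fun h k hk => h (-k) (by omega)⟩

theorem LoCoeff.mul_s11 (hy : LoCoeff y d a) (hz : LoCoeff z e b) :
    LoCoeff (y * z) (d + e) (a * b) := by
  rw [← neg_neg (d + e), ← hiCoeff_invert_iff, map_mul, neg_add]
  exact (hiCoeff_invert_iff.2 (by rwa [neg_neg])).mul_s11 (hiCoeff_invert_iff.2 (by rwa [neg_neg]))

theorem coeffA_add_s11 (y z : LaurentPolynomial ℤ) (k : ℤ) :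
    coeffA (y + z) k = coeffA y k + coeffA z k := rfl

theorem HiCoeff.add (hy : HiCoeff y d a) (hz : HiCoeff z d b) (hab : a + b ≠ 0) :
    HiCoeff (y + z) d (a + b) :=
  ⟨by rw [coeffA_add_s11, hy.1, hz.1], hab,
    fun k hk => by rw [coeffA_add_s11, hy.2.2 k hk, hz.2.2 k hk, add_zero]⟩

theorem HiCoeff.add_of_forall_le (hy : HiCoeff y d a) (hz : ∀ k, d ≤ k → coeffA z k = 0) :
    HiCoeff (y + z) d a :=
  ⟨by rw [coeffA_add_s11, hy.1, hz d le_rfl, add_zero], hy.2.1,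
    fun k hk => by rw [coeffA_add_s11, hy.2.2 k hk, hz k hk.le, add_zero]⟩

theorem LoCoeff.add_of_forall_le (hy : LoCoeff y d a) (hz : ∀ k, k ≤ d → coeffA z k = 0) :
    LoCoeff (y + z) d a :=
  ⟨by rw [coeffA_add_s11, hy.1, hz d le_rfl, add_zero], hy.2.1,
    fun k hk => by rw [coeffA_add_s11, hy.2.2 k hk, hz k hk.le, add_zero]⟩

theorem HiCoeff.congr {d' a' : ℤ} (h : HiCoeff y d a) (hd : d = d') (ha : a = a') :
    HiCoeff y d' a' := hd ▸ ha ▸ h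

theorem LoCoeff.congr {d' a' : ℤ} (h : LoCoeff y d a) (hd : d = d') (ha : a = a') :
    LoCoeff y d' a' := hd ▸ ha ▸ h

theorem coeffA_delta (k : ℤ) :
    coeffA (-T 2 - T (-2)) k = -(if 2 = k then 1 else 0) - (if -2 = k then 1 else 0) := by
  simp only [coeffA, AddMonoidAlgebra.coeff_sub, AddMonoidAlgebra.coeff_neg, Finsupp.sub_apply,
    Finsupp.neg_apply, T_apply]

theorem hiCoeff_delta : HiCoeff (-T 2 - T (-2)) 2 (-1) :=
  ⟨by simp [coeffA_delta], by norm_num, fun k hk => by rw [coeffA_delta]; split_ifs <;> omega⟩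

theorem loCoeff_delta : LoCoeff (-T 2 - T (-2)) (-2) (-1) :=
  ⟨by simp [coeffA_delta], by norm_num, fun k hk => by rw [coeffA_delta]; split_ifs <;> omega⟩

end Extremes

section BracketSum

variable {x y f g : LaurentPolynomial ℤ} {n : ℕ}

theorem hiCoeff_bracketSum_succ (hx : HiCoeff x (40 * n) 1) (hy : HiCoeff y (40 * n - 6) (-n))
    (hf : HiCoeff f 40 1) (hg : HiCoeff g 34 (-1)) :
    HiCoeff (x * g + y * f + (-T 2 - T (-2)) * (y * g)) (40 * (n + 1) - 6) (-(n + 1)) := by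
  have hxg := (hx.mul_s11 hg).congr (d' := 40 * (n + 1) - 6) (by ring) rfl
  have hyf := (hy.mul_s11 hf).congr (d' := 40 * (n + 1) - 6) (by ring) rfl
  have hδyg := hiCoeff_delta.mul_s11 (hy.mul_s11 hg)
  refine ((hxg.add hyf (by omega)).add_of_forall_le fun k hk => hδyg.2.2 k (by omega)).congr rfl ?_
  ring

theorem loCoeff_bracketSum_succ (hn : 1 ≤ n) (hx : LoCoeff x (-52 * n) ((-1) ^ n))
    (hy : LoCoeff y (-60 * n + 2) ((-1) ^ (n + 1))) (hf : LoCoeff f (-52) (-1))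
    (hg : LoCoeff g (-58) 1) :
    LoCoeff (x * g + y * f + (-T 2 - T (-2)) * (y * g)) (-60 * (n + 1) + 2) ((-1) ^ (n + 2)) := by
  have hxg := hx.mul_s11 hg
  have hyf := hy.mul_s11 hf
  have hδyg := (loCoeff_delta.mul_s11 (hy.mul_s11 hg)).congr (d' := -60 * (n + 1) + 2) (by ring)
    (a' := (-1) ^ (n + 2)) (by ring)
  rw [add_comm]
  refine hδyg.add_of_forall_le fun k hk => ?_
  rw [coeffA_add_s11, hxg.2.2 k (by omega), hyf.2.2 k (by omega), add_zero]

end BracketSum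

/-- the extreme monomials of the iterated bracket-vector entries f_n, g_n. -/
theorem stmt_11 (f g : LaurentPolynomial ℤ)
    (hfh : HiCoeff f 40 1) (hfl : LoCoeff f (-52) (-1))
    (hgh : HiCoeff g 34 (-1)) (hgl : LoCoeff g (-58) 1)
    (F G : ℕ → LaurentPolynomial ℤ)
    (hF1 : F 1 = f) (hG1 : G 1 = g)
    (hFrec : ∀ n : ℕ, 1 ≤ n → F (n+1) = F n * f)
    (hGrec : ∀ n : ℕ, 1 ≤ n →
      G (n+1) = F n * g + G n * f + (-T 2 - T (-2)) * (G n * g)) :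
    ∀ n : ℕ, 1 ≤ n →
      HiCoeff (F n) (40*(n:ℤ)) 1 ∧
      LoCoeff (F n) (-52*(n:ℤ)) ((-1)^n) ∧
      HiCoeff (G n) (40*(n:ℤ) - 6) (-(n:ℤ)) ∧
      LoCoeff (G n) (-60*(n:ℤ) + 2) ((-1)^(n+1)) := by
  intro n hn
  induction n, hn using Nat.le_induction with
  | base =>
    rw [hF1, hG1]
    exact ⟨hfh, hfl, hgh, hgl⟩
  | succ n hn ih =>
    obtain ⟨hFh, hFl, hGh, hGl⟩ := ih
    rw [hFrec n hn, hGrec n hn]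
    push_cast
    exact ⟨(hFh.mul_s11 hfh).congr (by ring) (by ring),
      (hFl.mul_s11 hfl).congr (by ring) (pow_succ _ _).symm,
      hiCoeff_bracketSum_succ hFh hGh hfh hgh, loCoeff_bracketSum_succ hn hFl hGl hfl hgl⟩
end
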